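/- Let G be a finite simple graph on n ≥ 2 vertices. Let G_0 = G and, for each j, let G_{j+1} be obtained from G_j by deleting a vertex of maximum degree of G_j. Then f(G) = min{ diff(G_j) + j : j = 0, 1, …, n−2 }. -/
import Mathlib


open Finset

variable {V : Type*}

open scoped Classical in
/-- Degree of `v` in the subgraph of `G` induced on the vertex set `A`
(number of neighbours of `v` inside `A`). -/
noncomputable def degOn (G : SimpleGraph V) (A : Finset V) (v : V) : ℕ :=
  (A.filter fun w => G.Adj v w).card

/-- Maximum degree of the subgraph of `G` induced on `A`. -/
noncomputable def maxDegOn (G : SimpleGraph V) (A : Finset V) : ℕ :=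
  A.sup (degOn G A)

open scoped Classical in
/-- The subgraph of `G` induced on `A` has fewer than `k` vertices or at least `k`
vertices realising its maximum degree. -/
def equates (G : SimpleGraph V) (k : ℕ) (A : Finset V) : Prop :=
  A.card < k ∨ k ≤ (A.filter fun v => degOn G A v = maxDegOn G A).card

open scoped Classical in
/-- `f_k` of the subgraph of `G` induced on `A`: the minimum number of vertices of `A`
whose deletion leaves an induced subgraph with fewer than `k` vertices or with at
least `k` vertices realising its maximum degree. -/
noncomputable def fkOn (G : SimpleGraph V) (k : ℕ) (A : Finset V) : ℕ :=
  sInf {m | ∃ S, S ⊆ A ∧ S.card = m ∧ equates G k (A \ S)}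

/-- `f_k(G)`. -/
noncomputable def fk [Fintype V] (G : SimpleGraph V) (k : ℕ) : ℕ :=
  fkOn G k Finset.univ

/-- `diff` of the subgraph of `G` induced on `A`: the largest degree minus the
second-largest degree (with multiplicity) of this subgraph. -/
noncomputable def diffOn (G : SimpleGraph V) (A : Finset V) : ℕ :=
  maxDegOn G A - ((A.val.map (degOn G A)).erase (maxDegOn G A)).sup

/-- `diff(G) = d₁ - d₂`, the difference between the largest and second-largest
vertex degrees of `G`. -/
noncomputable def diffDeg [Fintype V] (G : SimpleGraph V) : ℕ :=
  diffOn G Finset.univ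

/-! ### Auxiliary lemmas -/

set_option linter.unusedSectionVars false
set_option linter.unusedVariables false

lemma sdiff_inst_congr {i1 i2 : DecidableEq V} (A S : Finset V) :
    @SDiff.sdiff _ (@Finset.instSDiff V i1) A S = @SDiff.sdiff _ (@Finset.instSDiff V i2) A S := by
  cases Subsingleton.elim i1 i2; rfl

section Helpers
open scoped Classical
variable [DecidableEq V] (G : SimpleGraph V)

lemma degOn_mono {A B : Finset V} (h : A ⊆ B) (v : V) : degOn G A v ≤ degOn G B v := by
  unfold degOn; exact card_le_card (filter_subset_filter _ h)

lemma exists_max {A : Finset V} (hA : A.Nonempty) :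
    ∃ v ∈ A, degOn G A v = maxDegOn G A := by
  obtain ⟨v, hv, h⟩ := Finset.exists_mem_eq_sup A hA (degOn G A)
  exact ⟨v, hv, h.symm⟩

lemma deg_le_second {A : Finset V} {v u : V} (hu : u ∈ A) (hne : u ≠ v) :
    degOn G A u ≤ (A.erase v).sup (degOn G A) :=
  le_sup (mem_erase.mpr ⟨hne, hu⟩)

lemma second_le_max (A : Finset V) (v : V) :
    (A.erase v).sup (degOn G A) ≤ maxDegOn G A :=
  Finset.sup_mono (erase_subset _ _)

lemma diffOn_eq {A : Finset V} {v : V} (hv : v ∈ A) (hmax : degOn G A v = maxDegOn G A) :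
    diffOn G A = maxDegOn G A - (A.erase v).sup (degOn G A) := by
  unfold diffOn
  congr 1
  have h1 : A.val = v ::ₘ (A.erase v).val := by
    rw [Finset.erase_val]
    exact (Multiset.cons_erase (Finset.mem_def.mp hv)).symm
  conv_lhs => rw [h1]
  rw [Multiset.map_cons, hmax, Multiset.erase_cons_head, Finset.sup_def]

lemma degOn_le_card_pred {A : Finset V} {v : V} (hv : v ∈ A) :
    degOn G A v ≤ A.card - 1 := by
  have : (A.filter fun w => G.Adj v w) ⊆ A.erase v := by
    intro x hx
    rcases mem_filter.mp hx with ⟨hxA, hadj⟩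
    exact mem_erase.mpr ⟨fun h => G.irrefl (h ▸ hadj), hxA⟩
  calc degOn G A v ≤ (A.erase v).card := card_le_card this
    _ = A.card - 1 := card_erase_of_mem hv

/-- One can always delete `diffOn G A` vertices so that the remaining induced
subgraph has at least two vertices of maximum degree. -/
lemma claimA {A : Finset V} (hA : 2 ≤ A.card) :
    ∃ S ⊆ A, S.card = diffOn G A ∧ equates G 2 (A \ S) := by
  have hAne : A.Nonempty := card_pos.mp (by omega)
  obtain ⟨v, hvA, hvmax⟩ := exists_max G hAne
  have hAe : (A.erase v).Nonempty := by
    rw [← card_pos, card_erase_of_mem hvA]; omega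
  obtain ⟨w, hw, hwd⟩ := Finset.exists_mem_eq_sup _ hAe (degOn G A)
  have hwA : w ∈ A := mem_of_mem_erase hw
  have hwv : w ≠ v := (mem_erase.mp hw).1
  set d1 := maxDegOn G A with hd1
  set d2 := (A.erase v).sup (degOn G A) with hd2
  have hd21 : d2 ≤ d1 := second_le_max G A v
  have hdiff : diffOn G A = d1 - d2 := diffOn_eq G hvA hvmax
  have hdegw : degOn G A w = d2 := hwd.symm
  set t := d1 - d2 with ht
  rcases Nat.eq_zero_or_pos t with ht0 | htpos
  · -- t = 0 : v and w both attain the max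
    refine ⟨∅, empty_subset _, by rw [hdiff, ht0]; simp, ?_⟩
    right
    rw [sdiff_empty]
    have hd2d1 : d2 = d1 := le_antisymm hd21 (by omega)
    have hsub : ({v, w} : Finset V) ⊆ A.filter fun u => degOn G A u = maxDegOn G A := by
      intro x hx
      rcases mem_insert.mp hx with rfl | hx
      · exact mem_filter.mpr ⟨hvA, hvmax⟩
      · rw [mem_singleton] at hx; subst hx
        exact mem_filter.mpr ⟨hwA, by rw [hdegw, hd2d1]⟩
    calc (2 : ℕ) = ({v, w} : Finset V).card := (card_pair (Ne.symm hwv)).symm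
      _ ≤ _ := card_le_card hsub
  · -- t ≥ 1
    set Nv := A.filter (fun x => G.Adj v x) with hNv
    set Nw := A.filter (fun x => G.Adj w x) with hNw
    have hNvcard : Nv.card = d1 := hvmax
    have hNwcard : Nw.card = d2 := hdegw
    have hvNv : v ∉ Nv := by simp [hNv, SimpleGraph.irrefl]
    have hNvA : Nv ⊆ A := filter_subset _ _
    set P := Nv \ insert w Nw with hP
    have hPcard : t ≤ P.card := by
      by_cases hadj : G.Adj v w
      · -- w ∈ Nv ; counting argument
        by_contra hlt
        push_neg at hlt
        have hvNw : v ∈ Nw := mem_filter.mpr ⟨hvA, hadj.symm⟩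
        have h1 : Nv.card ≤ P.card + (Nv ∩ insert w Nw).card := by
          conv_lhs => rw [← Finset.sdiff_union_inter Nv (insert w Nw)]
          exact card_union_le _ _
        have h2 : Nv ∩ insert w Nw ⊆ insert w (Nv ∩ Nw) := by
          intro x hx
          rcases mem_inter.mp hx with ⟨hx1, hx2⟩
          rcases mem_insert.mp hx2 with rfl | hx2
          · exact mem_insert_self _ _
          · exact mem_insert_of_mem (mem_inter.mpr ⟨hx1, hx2⟩)
        have h3 : Nv ∩ Nw ⊆ Nw.erase v := by
          intro x hx
          rcases mem_inter.mp hx with ⟨hx1, hx2⟩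
          exact mem_erase.mpr ⟨fun h => hvNv (h ▸ hx1), hx2⟩
        have h4 : (Nv ∩ Nw).card ≤ d2 - 1 := by
          calc (Nv ∩ Nw).card ≤ (Nw.erase v).card := card_le_card h3
            _ = d2 - 1 := by rw [card_erase_of_mem hvNw, hNwcard]
        have h5 : (Nv ∩ insert w Nw).card ≤ d2 := by
          calc (Nv ∩ insert w Nw).card ≤ (insert w (Nv ∩ Nw)).card := card_le_card h2
            _ ≤ (Nv ∩ Nw).card + 1 := card_insert_le _ _
            _ ≤ d2 := by have := hNwcard ▸ card_pos.mpr ⟨v, hvNw⟩; omega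
        rw [hNvcard] at h1
        omega
      · -- w ∉ Nv
        have hwNv : w ∉ Nv := by simp [hNv, hadj]
        have : P = Nv \ Nw := by
          ext x
          simp only [hP, mem_sdiff, mem_insert]
          constructor
          · rintro ⟨h1, h2⟩; exact ⟨h1, fun h => h2 (Or.inr h)⟩
          · rintro ⟨h1, h2⟩
            exact ⟨h1, fun h => h.elim (fun he => hwNv (he ▸ h1)) h2⟩
        rw [this]
        calc t = Nv.card - Nw.card := by rw [hNvcard, hNwcard]
          _ ≤ (Nv \ Nw).card := le_card_sdiff _ _
    obtain ⟨S, hSP, hScard⟩ := Finset.exists_subset_card_eq hPcard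
    have hSNv : S ⊆ Nv := hSP.trans (sdiff_subset)
    have hSA : S ⊆ A := hSNv.trans hNvA
    have hvS : v ∉ S := fun h => hvNv (hSNv h)
    have hwS : w ∉ S := fun h => (mem_sdiff.mp (hSP h)).2 (mem_insert_self _ _)
    have hSNw : ∀ x ∈ S, x ∉ Nw := fun x hx h =>
      (mem_sdiff.mp (hSP hx)).2 (mem_insert_of_mem h)
    set B := A \ S with hB
    have hvB : v ∈ B := mem_sdiff.mpr ⟨hvA, hvS⟩
    have hwB : w ∈ B := mem_sdiff.mpr ⟨hwA, hwS⟩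
    have hdegBv : degOn G B v = d2 := by
      have h1 : (B.filter fun x => G.Adj v x) = Nv \ S := by
        ext x
        simp only [hB, hNv, mem_sdiff, mem_filter]
        tauto
      have : degOn G B v = (Nv \ S).card := by rw [degOn, h1]
      rw [this, card_sdiff_of_subset hSNv, hNvcard, hScard]
      omega
    have hdegBw : degOn G B w = d2 := by
      have h1 : (B.filter fun x => G.Adj w x) = Nw := by
        ext x
        simp only [hB, hNw, mem_sdiff, mem_filter]
        constructor
        · rintro ⟨⟨h1, h2⟩, h3⟩; exact ⟨h1, h3⟩
        · rintro ⟨h1, h3⟩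
          exact ⟨⟨h1, fun hs => hSNw x hs (mem_filter.mpr ⟨h1, h3⟩)⟩, h3⟩
      have : degOn G B w = Nw.card := by rw [degOn, h1]
      rw [this, hNwcard]
    have hdegB_le : ∀ u ∈ B, degOn G B u ≤ d2 := by
      intro u huB
      by_cases hu : u = v
      · subst hu; rw [hdegBv]
      · calc degOn G B u ≤ degOn G A u := degOn_mono G sdiff_subset u
          _ ≤ d2 := deg_le_second G (mem_sdiff.mp huB).1 hu
    have hmaxB : maxDegOn G B = d2 := by
      refine le_antisymm (Finset.sup_le hdegB_le) ?_
      rw [← hdegBv]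
      exact le_sup hvB
    refine ⟨S, hSA, by rw [hdiff]; exact hScard, Or.inr ?_⟩
    have hsub : ({v, w} : Finset V) ⊆ B.filter fun u => degOn G B u = maxDegOn G B := by
      intro x hx
      rcases mem_insert.mp hx with rfl | hx
      · exact mem_filter.mpr ⟨hvB, by rw [hdegBv, hmaxB]⟩
      · rw [mem_singleton] at hx; subst hx
        exact mem_filter.mpr ⟨hwB, by rw [hdegBw, hmaxB]⟩
    calc (2 : ℕ) = ({v, w} : Finset V).card := (card_pair (Ne.symm hwv)).symm
      _ ≤ _ := card_le_card hsub

/-- If fewer than `diffOn G A` vertices are deleted yet the result equates,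
then the (unique) maximum-degree vertex belongs to the deleted set. -/
lemma key_step {A S : Finset V} (hS : S ⊆ A) (h2 : 2 ≤ A.card)
    (heq : equates G 2 (A \ S)) (hd : S.card < diffOn G A) :
    ∃ v ∈ S, degOn G A v = maxDegOn G A ∧
      ∀ u ∈ A, degOn G A u = maxDegOn G A → u = v := by
  have hAne : A.Nonempty := card_pos.mp (by omega)
  obtain ⟨v, hvA, hvmax⟩ := exists_max G hAne
  set d1 := maxDegOn G A with hd1
  set d2 := (A.erase v).sup (degOn G A) with hd2
  have hd21 : d2 ≤ d1 := second_le_max G A v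
  have hdiff : diffOn G A = d1 - d2 := diffOn_eq G hvA hvmax
  rw [hdiff] at hd
  have hlt : S.card + d2 < d1 := by omega
  have huniq : ∀ u ∈ A, degOn G A u = d1 → u = v := by
    intro u huA hu
    by_contra hne
    have := deg_le_second G huA hne
    rw [hu] at this
    omega
  have hd1card : d1 ≤ A.card - 1 := hvmax ▸ degOn_le_card_pred G hvA
  have hvS : v ∈ S := by
    by_contra hvS
    set B := A \ S with hB
    have hvB : v ∈ B := mem_sdiff.mpr ⟨hvA, hvS⟩
    have hBcard : B.card = A.card - S.card := card_sdiff_of_subset hS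
    have h2B : 2 ≤ B.card := by omega
    have hfilter : 2 ≤ (B.filter fun u => degOn G B u = maxDegOn G B).card := by
      rcases heq with h | h
      · omega
      · exact h
    have hdegBv : d1 - S.card ≤ degOn G B v := by
      have hsub : (A.filter fun x => G.Adj v x) \ S ⊆ B.filter fun x => G.Adj v x := by
        intro x hx
        rcases mem_sdiff.mp hx with ⟨hx1, hx2⟩
        rcases mem_filter.mp hx1 with ⟨hxA, hadj⟩
        exact mem_filter.mpr ⟨mem_sdiff.mpr ⟨hxA, hx2⟩, hadj⟩
      calc d1 - S.card = (A.filter fun x => G.Adj v x).card - S.card := by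
            rw [show (A.filter fun x => G.Adj v x).card = d1 from hvmax]
        _ ≤ ((A.filter fun x => G.Adj v x) \ S).card := le_card_sdiff _ _
        _ ≤ (B.filter fun x => G.Adj v x).card := card_le_card hsub
        _ = degOn G B v := rfl
    have hother : ∀ u ∈ B, u ≠ v → degOn G B u < degOn G B v := by
      intro u huB hne
      calc degOn G B u ≤ degOn G A u := degOn_mono G sdiff_subset u
        _ ≤ d2 := deg_le_second G (mem_sdiff.mp huB).1 hne
        _ < d1 - S.card := by omega
        _ ≤ degOn G B v := hdegBv
    have hmaxB : maxDegOn G B = degOn G B v := by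
      refine le_antisymm (Finset.sup_le fun u huB => ?_) (le_sup hvB)
      by_cases hu : u = v
      · subst hu; exact le_rfl
      · exact (hother u huB hu).le
    have hsub : (B.filter fun u => degOn G B u = maxDegOn G B) ⊆ {v} := by
      intro u hu
      rcases mem_filter.mp hu with ⟨huB, hud⟩
      rw [mem_singleton]
      by_contra hne
      have := hother u huB hne
      rw [hud, hmaxB] at this
      omega
    have := card_le_card hsub
    rw [card_singleton] at this
    omega
  exact ⟨v, hvS, hvmax, huniq⟩

/-- Lower bound, by induction on the size of the deleted set. -/
lemma LB : ∀ (s : ℕ) (A : ℕ → Finset V), 2 ≤ (A 0).card →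
    (∀ j < (A 0).card - 1, ∃ v ∈ A j,
      degOn G (A j) v = maxDegOn G (A j) ∧ A (j + 1) = (A j).erase v) →
    ∀ S ⊆ A 0, S.card = s → equates G 2 (A 0 \ S) →
    ∃ j < (A 0).card - 1, diffOn G (A j) + j ≤ s := by
  intro s
  induction s with
  | zero =>
    intro A h2 hstep S hS hcard heq
    by_cases hd : diffOn G (A 0) ≤ 0
    · exact ⟨0, by omega, by omega⟩
    · obtain ⟨v, hvS, -⟩ := key_step G hS h2 heq (by omega)
      exact absurd (card_pos.mpr ⟨v, hvS⟩) (by omega)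
  | succ s ih =>
    intro A h2 hstep S hS hcard heq
    by_cases hd : diffOn G (A 0) ≤ s + 1
    · exact ⟨0, by omega, by omega⟩
    · push_neg at hd
      obtain ⟨v, hvS, hvmax, huniq⟩ := key_step G hS h2 heq (by omega)
      have hvA : v ∈ A 0 := hS hvS
      obtain ⟨v', hv'A, hv'max, hA1⟩ := hstep 0 (by omega)
      have hv'v : v' = v := huniq v' hv'A hv'max
      rw [hv'v] at hA1
      have hdle : diffOn G (A 0) ≤ (A 0).card - 1 := by
        have h1 := diffOn_eq G hvA hvmax
        have h2' := degOn_le_card_pred G hvA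
        rw [hvmax] at h2'
        omega
      have hcard3 : 3 ≤ (A 0).card := by omega
      set A' : ℕ → Finset V := fun j => A (j + 1) with hA'
      have hA'0 : A' 0 = (A 0).erase v := hA1
      have hA'card : (A' 0).card = (A 0).card - 1 := by
        rw [hA'0, card_erase_of_mem hvA]
      have h2' : 2 ≤ (A' 0).card := by omega
      have hstep' : ∀ j < (A' 0).card - 1, ∃ u ∈ A' j,
          degOn G (A' j) u = maxDegOn G (A' j) ∧ A' (j + 1) = (A' j).erase u := by
        intro j hj
        exact hstep (j + 1) (by omega)
      have hS' : S.erase v ⊆ A' 0 := by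
        rw [hA'0]; exact erase_subset_erase v hS
      have hS'card : (S.erase v).card = s := by
        rw [card_erase_of_mem hvS, hcard]; omega
      have heq' : equates G 2 (A' 0 \ S.erase v) := by
        have : A' 0 \ S.erase v = A 0 \ S := by
          rw [hA'0]
          ext x
          simp only [mem_sdiff, mem_erase]
          constructor
          · rintro ⟨⟨hxv, hxA⟩, hxS⟩
            exact ⟨hxA, fun h => hxS ⟨hxv, h⟩⟩
          · rintro ⟨hxA, hxS⟩
            have hxv : x ≠ v := fun h => hxS (h ▸ hvS)
            exact ⟨⟨hxv, hxA⟩, fun h => hxS h.2⟩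
        rw [this]; exact heq
      obtain ⟨j, hj, hle⟩ := ih A' h2' hstep' (S.erase v) hS' hS'card heq'
      refine ⟨j + 1, by omega, ?_⟩
      have : diffOn G (A (j + 1)) + j ≤ s := hle
      omega

lemma seq_props (A : ℕ → Finset V)
    (hstep : ∀ j < (A 0).card - 1, ∃ v ∈ A j,
      degOn G (A j) v = maxDegOn G (A j) ∧ A (j + 1) = (A j).erase v) :
    ∀ j ≤ (A 0).card - 1, (A j).card = (A 0).card - j ∧ A j ⊆ A 0 := by
  intro j
  induction j with
  | zero => intro _; exact ⟨by omega, subset_rfl⟩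
  | succ j ih =>
    intro hj
    have hj' : j < (A 0).card - 1 := by omega
    obtain ⟨hc, hs⟩ := ih (by omega)
    obtain ⟨v, hv, -, he⟩ := hstep j hj'
    constructor
    · rw [he, card_erase_of_mem hv, hc]; omega
    · rw [he]; exact (erase_subset _ _).trans hs

lemma fkOn_le {A S : Finset V} (h1 : S ⊆ A) (h3 : equates G 2 (A \ S)) :
    fkOn G 2 A ≤ S.card := by
  apply Nat.sInf_le
  refine ⟨S, h1, rfl, ?_⟩
  rwa [sdiff_inst_congr (i2 := ‹DecidableEq V›)]

end Helpers

section ClassicalBridge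
open scoped Classical
variable (G : SimpleGraph V)

lemma fkOn_spec' (A : Finset V) :
    ∃ S, S ⊆ A ∧ S.card = fkOn G 2 A ∧ equates G 2 (A \ S) := by
  have hne : {m | ∃ S, S ⊆ A ∧ S.card = m ∧ equates G 2 (A \ S)}.Nonempty :=
    ⟨A.card, A, subset_rfl, rfl, Or.inl (by rw [sdiff_self]; simp)⟩
  exact Nat.sInf_mem hne

end ClassicalBridge

section Bridge2
variable [DecidableEq V] (G : SimpleGraph V)

lemma fkOn_spec (A : Finset V) :
    ∃ S, S ⊆ A ∧ S.card = fkOn G 2 A ∧ equates G 2 (A \ S) := by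
  obtain ⟨S, h1, h2, h3⟩ := fkOn_spec' G A
  refine ⟨S, h1, h2, ?_⟩
  rwa [sdiff_inst_congr (i1 := fun a b => Classical.propDecidable _)
    (i2 := ‹DecidableEq V›)] at h3

end Bridge2

/-- Let `G₀ = G` (on `n ≥ 2` vertices) and let `G_{j+1}` be obtained
from `G_j` by deleting a vertex of maximum degree of `G_j`.  Then
`f(G) = min { diff(G_j) + j : j = 0, …, n-2 }`. -/
theorem stmt3 {V : Type*} [Fintype V] [DecidableEq V] (G : SimpleGraph V)
    (hn : 2 ≤ Fintype.card V)
    (A : ℕ → Finset V) (hA0 : A 0 = Finset.univ)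
    (hstep : ∀ j < Fintype.card V - 1, ∃ v ∈ A j,
      degOn G (A j) v = maxDegOn G (A j) ∧ A (j + 1) = (A j).erase v) :
    fk G 2 = (Finset.range (Fintype.card V - 1)).inf'
      (Finset.nonempty_range_iff.mpr (by omega)) (fun j => diffOn G (A j) + j) := by
  set n := Fintype.card V with hn'
  have hA0card : (A 0).card = n := by rw [hA0, card_univ]
  have hstep' : ∀ j < (A 0).card - 1, ∃ v ∈ A j,
      degOn G (A j) v = maxDegOn G (A j) ∧ A (j + 1) = (A j).erase v := by
    rw [hA0card]; exact hstep
  have hprops := seq_props G A hstep'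
  rw [hA0card] at hprops
  apply le_antisymm
  · -- upper bound
    apply Finset.le_inf'
    intro j hj
    rw [mem_range] at hj
    obtain ⟨hcardj, hsubj⟩ := hprops j (by omega)
    have h2j : 2 ≤ (A j).card := by omega
    obtain ⟨Sj, hSjA, hSjcard, hSjeq⟩ := claimA G h2j
    have hsubj' : A j ⊆ (univ : Finset V) := subset_univ _
    have hdisj : Disjoint ((univ : Finset V) \ A j) Sj := by
      rw [disjoint_left]
      intro x hx hxS
      exact (mem_sdiff.mp hx).2 (hSjA hxS)
    have hunion : (univ : Finset V) \ (((univ : Finset V) \ A j) ∪ Sj) = A j \ Sj := by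
      ext x
      simp only [mem_sdiff, mem_union, mem_univ, true_and, not_or, not_and, not_not]
    have heqU : equates G 2 ((univ : Finset V) \ (((univ : Finset V) \ A j) ∪ Sj)) := by
      rw [hunion]; exact hSjeq
    have hle := fkOn_le G (subset_univ (((univ : Finset V) \ A j) ∪ Sj)) heqU
    have hcardU : (((univ : Finset V) \ A j) ∪ Sj).card = diffOn G (A j) + j := by
      rw [card_union_of_disjoint hdisj, card_sdiff_of_subset (subset_univ _), card_univ, ← hn',
        hcardj, hSjcard]
      omega
    calc fk G 2 = fkOn G 2 univ := rfl
      _ ≤ (((univ : Finset V) \ A j) ∪ Sj).card := hle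
      _ = diffOn G (A j) + j := hcardU
  · -- lower bound
    obtain ⟨S, hS, hScard, hSeq⟩ := fkOn_spec G (univ : Finset V)
    have hfkeq : S.card = fk G 2 := hScard
    obtain ⟨j, hj, hle⟩ := LB G S.card A (by omega) hstep' S
      (by rw [hA0]; exact hS) rfl (by rw [hA0]; exact hSeq)
    rw [hA0card] at hj
    calc (Finset.range (n - 1)).inf' _ (fun j => diffOn G (A j) + j)
        ≤ diffOn G (A j) + j := Finset.inf'_le _ (mem_range.mpr hj)
      _ ≤ S.card := hle
      _ = fk G 2 := hfkeq
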